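/- Let A₆ be the alternating group of degree 6, H = ⟨(1,2,3), (4,5,6)⟩ ≅ (ℤ/3ℤ)². Let ψ₂ and ψ₅ be the degree-1 characters of H given by ψ₂((1,2,3)) = 1, ψ₂((4,5,6)) = ζ₃ and ψ₅((1,2,3)) = ψ₅((4,5,6)) = ζ₃, with associated idempotents e_{ψ₂}, e_{ψ₅} ∈ ℚ(ζ₃)[A₆]. Then there is no g ∈ A₆ with e_{ψ₅} = g e_{ψ₂} g⁻¹; equivalently, ψ₂ and ψ₅ are not conjugate under the action of the normalizer in A₆, i.e., for all g ∈ A₆ the character x ↦ ψ₂(g⁻¹ x g) on gHg⁻¹ differs from ψ₅ whenever gHg⁻¹ = H, and g e_{ψ₂} g⁻¹ ≠ e_{ψ₅} for every g ∈ A₆. -/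

import Mathlib

open scoped Classical

/-- The idempotent `e_ψ^H = (1/|H|) ∑_{h∈H} ψ(h⁻¹) h` in the group algebra `K[G]`. -/
noncomputable def subIdem {G : Type} [Group G] [Fintype G] {K : Type} [Field K]
    (H : Subgroup G) (ψ : H → K) : MonoidAlgebra K G :=
  (Fintype.card H : K)⁻¹ • ∑ h : H, MonoidAlgebra.single (h : G) (ψ h⁻¹)

/-- The alternating group on the six letters `{1,…,6} ⊆ Fin 7`. -/
def A6 : Subgroup (Equiv.Perm (Fin 7)) :=
  alternatingGroup (Fin 7) ⊓ MulAction.stabilizer (Equiv.Perm (Fin 7)) (0 : Fin 7)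

private lemma coeff_smul_sum {G K : Type} [Group G] [DecidableEq G] [Field K] {I : Type} [Fintype I]
    (c : K) (F : I → K) (τ : I → G) (x : G) :
    ((c • ∑ h : I, MonoidAlgebra.single (τ h) (F h)) : MonoidAlgebra K G).coeff x
      = c * ∑ h : I, if τ h = x then F h else 0 := by
  rw [MonoidAlgebra.coeff_smul_apply, MonoidAlgebra.coeff_sum, Finsupp.finset_sum_apply]
  simp only [MonoidAlgebra.coeff_single, Finsupp.single_apply, smul_eq_mul]

theorem stmt12
    (K : Type) [Field K] [Algebra ℚ K] [IsCyclotomicExtension {3} ℚ K]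
    (ζ₃ : K) (hζ₃ : IsPrimitiveRoot ζ₃ 3)
    -- H = ⟨(1,2,3), (4,5,6)⟩ ≅ (ℤ/3ℤ)²
    (u₁ u₂ : A6)
    (hu₁ : (u₁ : Equiv.Perm (Fin 7)) = c[(1 : Fin 7), 2, 3])
    (hu₂ : (u₂ : Equiv.Perm (Fin 7)) = c[(4 : Fin 7), 5, 6])
    (hHiso : Nonempty ((Subgroup.closure {u₁, u₂} : Subgroup A6) ≃*
      (Multiplicative (ZMod 3) × Multiplicative (ZMod 3))))
    -- ψ₂ : ψ₂((1,2,3)) = 1, ψ₂((4,5,6)) = ζ₃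
    (ψ₂ : (Subgroup.closure {u₁, u₂} : Subgroup A6) →* K)
    (hψ₂u₁ : ψ₂ ⟨u₁, Subgroup.subset_closure (Set.mem_insert _ _)⟩ = 1)
    (hψ₂u₂ : ψ₂ ⟨u₂, Subgroup.subset_closure (Set.mem_insert_of_mem _ rfl)⟩ = ζ₃)
    -- ψ₅ : ψ₅((1,2,3)) = ζ₃, ψ₅((4,5,6)) = ζ₃
    (ψ₅ : (Subgroup.closure {u₁, u₂} : Subgroup A6) →* K)
    (hψ₅u₁ : ψ₅ ⟨u₁, Subgroup.subset_closure (Set.mem_insert _ _)⟩ = ζ₃)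
    (hψ₅u₂ : ψ₅ ⟨u₂, Subgroup.subset_closure (Set.mem_insert_of_mem _ rfl)⟩ = ζ₃) :
    -- there is no g ∈ A₆ with e_{ψ₅} = g e_{ψ₂} g⁻¹
    ∀ g : A6, MonoidAlgebra.single g (1 : K) * subIdem (Subgroup.closure {u₁, u₂}) ψ₂ *
        MonoidAlgebra.single g⁻¹ (1 : K) ≠ subIdem (Subgroup.closure {u₁, u₂}) ψ₅ := by
  intro g hEq
  have hCZ : CharZero K := charZero_of_injective_algebraMap (algebraMap ℚ K).injective
  -- commuting generators, order 3
  have hcomm : u₁ * u₂ = u₂ * u₁ := Subtype.ext (by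
    simp only [Subgroup.coe_mul, Submonoid.coe_mul, hu₁, hu₂]; decide)
  have hu₁3 : u₁ ^ 3 = 1 := Subtype.ext (by push_cast [hu₁]; decide)
  have hu₂3 : u₂ ^ 3 = 1 := Subtype.ext (by push_cast [hu₂]; decide)
  -- every element of H is u₁^a * u₂^b
  have hform : ∀ y : A6, y ∈ Subgroup.closure {u₁, u₂} → ∃ a b : ℕ, y = u₁ ^ a * u₂ ^ b := by
    intro y hy
    refine Subgroup.closure_induction (fun z hz => ?_) ⟨0, 0, by simp⟩
      (fun z w _ _ ⟨a, b, hz⟩ ⟨a', b', hw⟩ => ?_) (fun z _ ⟨a, b, hz⟩ => ?_) hy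
    · rcases hz with rfl | rfl
      · exact ⟨1, 0, by simp⟩
      · exact ⟨0, 1, by simp⟩
    · refine ⟨a + a', b + b', ?_⟩
      have hc : Commute u₁ u₂ := hcomm
      rw [hz, hw, pow_add, pow_add]
      rw [mul_assoc, ← mul_assoc (u₂ ^ b), (hc.symm.pow_pow b a').eq]
      rw [mul_assoc, mul_assoc]
    · refine ⟨2 * a, 2 * b, ?_⟩
      have hc : Commute u₁ u₂ := hcomm
      rw [hz, eq_comm, eq_inv_iff_mul_eq_one]
      calc u₁ ^ (2*a) * u₂ ^ (2*b) * (u₁ ^ a * u₂ ^ b)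
          = u₁ ^ (2*a) * u₁ ^ a * (u₂ ^ (2*b) * u₂ ^ b) := by
            rw [mul_assoc, ← mul_assoc (u₂ ^ (2*b)), (hc.symm.pow_pow (2*b) a).eq,
              mul_assoc, ← mul_assoc]
        _ = (u₁ ^ 3) ^ a * (u₂ ^ 3) ^ b := by
            rw [← pow_add, ← pow_add, ← pow_mul, ← pow_mul]
            ring_nf
        _ = 1 := by rw [hu₁3, hu₂3]; simp
  -- rewrite LHS of hEq
  have hL : MonoidAlgebra.single g (1 : K) * subIdem (Subgroup.closure {u₁, u₂}) ψ₂ *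
        MonoidAlgebra.single g⁻¹ (1 : K)
      = (Fintype.card (Subgroup.closure {u₁, u₂} : Subgroup A6) : K)⁻¹ •
          ∑ h : (Subgroup.closure {u₁, u₂} : Subgroup A6),
            MonoidAlgebra.single (g * (h : A6) * g⁻¹) (ψ₂ h⁻¹) := by
    simp only [subIdem, mul_smul_comm, smul_mul_assoc, Finset.mul_sum, Finset.sum_mul,
      MonoidAlgebra.single_mul_single, one_mul, mul_one, mul_assoc]
  rw [hL, subIdem] at hEq
  have hEqx := congrArg (fun f : MonoidAlgebra K A6 => f.coeff (g * u₁ * g⁻¹)) hEq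
  simp only [coeff_smul_sum] at hEqx
  have hcard : (Fintype.card (Subgroup.closure {u₁, u₂} : Subgroup A6) : K) ≠ 0 :=
    Nat.cast_ne_zero.mpr Fintype.card_ne_zero
  -- left sum equals 1
  have hEq2 := mul_left_cancel₀ (inv_ne_zero hcard) hEqx
  have hLsum : (∑ h : (Subgroup.closure {u₁, u₂} : Subgroup A6),
      if (h : A6) = g * u₁ * g⁻¹ then ψ₅ h⁻¹ else 0) = 1 := by
    rw [← hEq2, Finset.sum_eq_single
      (⟨u₁, Subgroup.subset_closure (Set.mem_insert _ _)⟩ :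
        (Subgroup.closure {u₁, u₂} : Subgroup A6))]
    · rw [if_pos rfl, map_inv, hψ₂u₁, inv_one]
    · intro h _ hne
      rw [if_neg]
      intro he
      exact hne (Subtype.ext (mul_left_cancel (mul_right_cancel he)))
    · intro h; exact absurd (Finset.mem_univ _) h
  by_cases hxH : g * u₁ * g⁻¹ ∈ (Subgroup.closure {u₁, u₂} : Subgroup A6)
  · -- x ∈ H : then ψ₅ takes value 1 at x
    rw [Finset.sum_eq_single (⟨g * u₁ * g⁻¹, hxH⟩ :
        (Subgroup.closure {u₁, u₂} : Subgroup A6))] at hLsum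
    · rw [if_pos rfl, map_inv, inv_eq_one] at hLsum
      -- write x = u₁^a * u₂^b
      obtain ⟨a, b, hab⟩ := hform _ hxH
      have hwv : (⟨g * u₁ * g⁻¹, hxH⟩ : (Subgroup.closure {u₁, u₂} : Subgroup A6)) =
          (⟨u₁, Subgroup.subset_closure (Set.mem_insert _ _)⟩ :
            (Subgroup.closure {u₁, u₂} : Subgroup A6)) ^ a *
          (⟨u₂, Subgroup.subset_closure (Set.mem_insert_of_mem _ rfl)⟩ :
            (Subgroup.closure {u₁, u₂} : Subgroup A6)) ^ b := by
        apply Subtype.ext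
        push_cast
        exact hab
      rw [hwv, map_mul, map_pow, map_pow, hψ₅u₁, hψ₅u₂, ← pow_add] at hLsum
      have hdvd : 3 ∣ a + b := (hζ₃.pow_eq_one_iff_dvd _).mp hLsum
      -- now look at supports of permutations
      have hxperm : ((g * u₁ * g⁻¹ : A6) : Equiv.Perm (Fin 7)).support.card = 3 := by
        push_cast [hu₁]
        rw [Equiv.Perm.card_support_conj]
        decide
      have habperm : ((g * u₁ * g⁻¹ : A6) : Equiv.Perm (Fin 7)) =
          c[(1 : Fin 7), 2, 3] ^ (a % 3) * c[(4 : Fin 7), 5, 6] ^ (b % 3) := by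
        rw [hab]
        push_cast [hu₁, hu₂]
        have h1 : (c[(1 : Fin 7), 2, 3]) ^ 3 = 1 := by decide
        have h2 : (c[(4 : Fin 7), 5, 6]) ^ 3 = 1 := by decide
        conv_lhs => rw [← Nat.div_add_mod a 3, ← Nat.div_add_mod b 3]
        rw [pow_add, pow_add, pow_mul, pow_mul, h1, h2, one_pow, one_pow, one_mul, one_mul]
      rw [habperm] at hxperm
      have ha' : a % 3 < 3 := Nat.mod_lt _ (by norm_num)
      have hb' : b % 3 < 3 := Nat.mod_lt _ (by norm_num)
      have hdvd' : (a % 3 + b % 3) % 3 = 0 := by omega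
      interval_cases h : a % 3 <;> interval_cases h2 : b % 3 <;>
        first
          | omega
          | exact absurd hxperm (by decide)
    · intro h _ hne
      rw [if_neg]
      intro he
      exact hne (Subtype.ext he)
    · intro h; exact absurd (Finset.mem_univ _) h
  · -- x ∉ H : the right sum is 0, contradiction
    rw [Finset.sum_eq_zero (fun h _ => ?_)] at hLsum
    · exact one_ne_zero hLsum.symm
    · rw [if_neg]
      intro he
      exact hxH (he ▸ h.2)
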